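/- arXiv:1606.01856 — 2 statements merged into one kernel-verified Lean document; each statement's English description precedes it below -/
import Mathlib

section
/- Let G be a generator with dimensions w_G, h_G and stages (X_i)_{i≥1}. Then for every i ≥ 1, X_{i+1} ∩ ({0,…,w_G^i−1} × {0,…,h_G^i−1}) = X_i; that is, the portion of stage i+1 lying in the bounding box of stage i is exactly stage i. -/
/-- Two lattice points are adjacent iff they are at Euclidean distance 1
(i.e. they differ by exactly 1 in exactly one coordinate). -/
def adjPt (p q : ℕ × ℕ) : Prop :=
  (p.1 = q.1 ∧ (p.2 + 1 = q.2 ∨ q.2 + 1 = p.2)) ∨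
  (p.2 = q.2 ∧ (p.1 + 1 = q.1 ∨ q.1 + 1 = p.1))

/-- The graph with vertex set `S` and an edge between any two points at
Euclidean distance 1. -/
def gridGraph (S : Set (ℕ × ℕ)) : SimpleGraph S where
  Adj p q := adjPt p.1 q.1
  symm := by
    constructor
    rintro ⟨p, hp⟩ ⟨q, hq⟩ (⟨h1, h2⟩ | ⟨h1, h2⟩)
    · exact Or.inl ⟨h1.symm, h2.symm⟩
    · exact Or.inr ⟨h1.symm, h2.symm⟩
  loopless := by
    constructor
    rintro ⟨p, hp⟩ (⟨_, h | h⟩ | ⟨_, h | h⟩) <;> omega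

/-- A set `S ⊆ ℕ²` is connected if its grid graph is connected. -/
def IsConnectedSet (S : Set (ℕ × ℕ)) : Prop := (gridGraph S).Connected

/-- `wG G = max{x | (x,y) ∈ G} + 1`. -/
noncomputable def wG (G : Set (ℕ × ℕ)) : ℕ := sSup ((fun p => p.1) '' G) + 1

/-- `hG G = max{y | (x,y) ∈ G} + 1`. -/
noncomputable def hG (G : Set (ℕ × ℕ)) : ℕ := sSup ((fun p => p.2) '' G) + 1

/-- The rectangle `{0,…,w−1} × {0,…,h−1}`. -/
def gridBox (w h : ℕ) : Set (ℕ × ℕ) := {p | p.1 < w ∧ p.2 < h}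

/-- `G` is a generator of a discrete self-similar fractal. -/
structure IsGenerator (G : Set (ℕ × ℕ)) : Prop where
  finite : G.Finite
  zero_mem : (0, 0) ∈ G
  connected : IsConnectedSet G
  one_lt_w : 1 < wG G
  one_lt_h : 1 < hG G
  ssubset_box : G ⊂ gridBox (wG G) (hG G)

/-- The stages of the discrete self-similar fractal generated by `G`:
`X_1 = G` and `X_{i+1} = X_i + (wG^i, hG^i)·G`.  (`stage G 0` is unused.) -/
noncomputable def stage (G : Set (ℕ × ℕ)) : ℕ → Set (ℕ × ℕ)
  | 0 => ∅
  | 1 => G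
  | (i + 2) => {p | ∃ a ∈ stage G (i + 1), ∃ b ∈ G,
      p = (a.1 + wG G ^ (i + 1) * b.1, a.2 + hG G ^ (i + 1) * b.2)}

/-- The discrete self-similar fractal `F = ⋃_{i ≥ 1} X_i` generated by `G`. -/
noncomputable def fractal (G : Set (ℕ × ℕ)) : Set (ℕ × ℕ) := ⋃ i : ℕ, stage G (i + 1)

/-- The generator of the Sierpinski triangle: `{(0,0),(1,0),(0,1)}`. -/
def sierpGen : Set (ℕ × ℕ) := {(0, 0), (1, 0), (0, 1)}

/-! Stage `i + 1` is obtained by copying stage `i` to the lower-left corner of each cell of the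
grid of mesh `(wG G ^ i, hG G ^ i)` selected by `G`; the copy selected by `(0, 0) ∈ G` is stage `i`
itself, and every other copy lies outside the box of stage `i`. -/

lemma add_mul_mem_gridBox {m n w h : ℕ} {a b : ℕ × ℕ} (ha : a ∈ gridBox m n)
    (hb : b ∈ gridBox w h) : (a.1 + m * b.1, a.2 + n * b.2) ∈ gridBox (m * w) (n * h) :=
  ⟨Nat.add_mul_lt_mul_of_lt_of_lt ha.1 hb.1, Nat.add_mul_lt_mul_of_lt_of_lt ha.2 hb.2⟩

lemma eq_zero_of_add_mul_lt {a b m : ℕ} (h : a + m * b < m) : b = 0 := by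
  have : m * b < m * 1 := by omega
  exact Nat.lt_one_iff.1 (Nat.lt_of_mul_lt_mul_left this)

lemma add_mul_mem_gridBox_iff {m n : ℕ} {a b : ℕ × ℕ} :
    (a.1 + m * b.1, a.2 + n * b.2) ∈ gridBox m n ↔ a ∈ gridBox m n ∧ b = (0, 0) := by
  constructor
  · rintro ⟨h1, h2⟩
    obtain rfl : b = (0, 0) := Prod.ext (eq_zero_of_add_mul_lt h1) (eq_zero_of_add_mul_lt h2)
    exact ⟨⟨by simpa using h1, by simpa using h2⟩, rfl⟩
  · rintro ⟨ha, rfl⟩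
    simpa using ha

section stage

variable {G : Set (ℕ × ℕ)}

lemma mem_stage_add_two {i : ℕ} {p : ℕ × ℕ} :
    p ∈ stage G (i + 2) ↔ ∃ a ∈ stage G (i + 1), ∃ b ∈ G,
      p = (a.1 + wG G ^ (i + 1) * b.1, a.2 + hG G ^ (i + 1) * b.2) :=
  Iff.rfl

lemma stage_subset_stage_succ (h0 : (0, 0) ∈ G) (i : ℕ) : stage G (i + 1) ⊆ stage G (i + 2) :=
  fun p hp => mem_stage_add_two.2 ⟨p, hp, (0, 0), h0, by simp⟩

lemma stage_subset_gridBox (hbox : G ⊆ gridBox (wG G) (hG G)) (i : ℕ) :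
    stage G (i + 1) ⊆ gridBox (wG G ^ (i + 1)) (hG G ^ (i + 1)) := by
  induction i with
  | zero => simpa [stage] using hbox
  | succ i ih =>
    intro p hp
    obtain ⟨a, ha, b, hb, rfl⟩ := mem_stage_add_two.1 hp
    rw [pow_succ _ (i + 1), pow_succ _ (i + 1)]
    exact add_mul_mem_gridBox (ih ha) (hbox hb)

end stage

/-- for every `i ≥ 1`, the portion of stage `i+1` lying in the
bounding box of stage `i` is exactly stage `i`. -/
theorem stage_succ_inter_box (G : Set (ℕ × ℕ)) (hGen : IsGenerator G) :
    ∀ i : ℕ, 1 ≤ i →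
      stage G (i + 1) ∩ gridBox (wG G ^ i) (hG G ^ i) = stage G i := by
  intro i hi
  obtain ⟨i, rfl⟩ : ∃ j, i = j + 1 := ⟨i - 1, by omega⟩
  ext p
  constructor
  · rintro ⟨hp, hbox⟩
    obtain ⟨a, ha, b, -, rfl⟩ := mem_stage_add_two.1 hp
    obtain ⟨-, rfl⟩ := add_mul_mem_gridBox_iff.1 hbox
    simpa using ha
  · exact fun hp => ⟨stage_subset_stage_succ hGen.zero_mem i hp,
      stage_subset_gridBox hGen.ssubset_box.subset i hp⟩
end

section
/- Let G be a generator with dimensions w_G, h_G and stages (X_i)_{i≥1}, and suppose the second stage X_2 is connected. Then there exists y ∈ ℕ such that both (0,y) ∈ G and (w_G−1,y) ∈ G; that is, the leftmost column and the rightmost column of G occupy a common row, so that a horizontal connection point between two horizontally adjacent copies exists. -/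
theorem Nat.mod_eq_sub_one_of_succ_div_ne {x w : ℕ} (hne : (x + 1) / w ≠ x / w) :
    x % w = w - 1 ∧ (x + 1) % w = 0 := by
  have hdvd : w ∣ x + 1 := by_contra fun h => hne (Nat.succ_div_of_not_dvd h)
  have hw : 0 < w := Nat.pos_of_ne_zero fun h => by simp [h] at hdvd
  have hsucc := Nat.succ_div_of_dvd hdvd
  have hx := Nat.mod_add_div x w
  have hx1 := Nat.mod_add_div (x + 1) w
  have hlt := Nat.mod_lt x hw
  rw [hsucc, Nat.mod_eq_zero_of_dvd hdvd, Nat.mul_add] at hx1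
  omega

theorem SimpleGraph.Preconnected.exists_adj_ne {V α : Type*} {Γ : SimpleGraph V}
    (hΓ : Γ.Preconnected) (f : V → α) {u v : V} (hne : f u ≠ f v) :
    ∃ x y, Γ.Adj x y ∧ f x ≠ f y := by
  obtain ⟨walk⟩ := hΓ u v
  obtain ⟨d, -, hd, hd'⟩ := walk.exists_boundary_dart {x | f x = f u} rfl hne.symm
  exact ⟨d.fst, d.snd, d.adj, fun h => hd' (h.symm.trans hd)⟩

theorem exists_mem_fst_eq_wG_sub_one {G : Set (ℕ × ℕ)} (hfin : G.Finite) (hne : G.Nonempty) :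
    ∃ b ∈ G, b.1 = wG G - 1 := by
  obtain ⟨b, hb, hb1⟩ := (hne.image Prod.fst).csSup_mem (hfin.image _)
  exact ⟨b, hb, by rw [wG, ← hb1, Nat.add_sub_cancel]⟩

theorem add_mul_mem_stage_two {G : Set (ℕ × ℕ)} {a c : ℕ × ℕ} (ha : a ∈ G) (hc : c ∈ G) :
    (a.1 + wG G * c.1, a.2 + hG G * c.2) ∈ stage G 2 :=
  ⟨a, ha, c, hc, by simp only [zero_add, pow_one]⟩

theorem mod_mem_of_mem_stage_two {G : Set (ℕ × ℕ)} (hbox : G ⊆ gridBox (wG G) (hG G))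
    {p : ℕ × ℕ} (hp : p ∈ stage G 2) : (p.1 % wG G, p.2 % hG G) ∈ G := by
  obtain ⟨a, ha, c, -, rfl⟩ := hp
  change a ∈ G at ha
  obtain ⟨ha1, ha2⟩ := hbox ha
  simpa only [zero_add, pow_one, Nat.add_mul_mod_self_left, Nat.mod_eq_of_lt ha1,
    Nat.mod_eq_of_lt ha2] using ha

theorem exists_common_row_of_succ {G : Set (ℕ × ℕ)} {w h i j : ℕ}
    (hl : (i % w, j % h) ∈ G) (hr : ((i + 1) % w, j % h) ∈ G) (hne : (i + 1) / w ≠ i / w) :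
    ∃ y, (0, y) ∈ G ∧ (w - 1, y) ∈ G := by
  obtain ⟨hi, hi1⟩ := Nat.mod_eq_sub_one_of_succ_div_ne hne
  exact ⟨j % h, hi1 ▸ hr, hi ▸ hl⟩

theorem exists_common_row_of_adjPt {G : Set (ℕ × ℕ)} {w h : ℕ} {p q : ℕ × ℕ}
    (hp : (p.1 % w, p.2 % h) ∈ G) (hq : (q.1 % w, q.2 % h) ∈ G) (hpq : adjPt p q)
    (hne : p.1 / w ≠ q.1 / w) :
    ∃ y, (0, y) ∈ G ∧ (w - 1, y) ∈ G := by
  rcases hpq with ⟨hx, -⟩ | ⟨hy, hx | hx⟩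
  · exact absurd (congrArg (· / w) hx) hne
  · rw [← hx, ← hy] at hq
    exact exists_common_row_of_succ hp hq (hx ▸ hne.symm)
  · rw [← hx, hy] at hp
    exact exists_common_row_of_succ hq hp (hx ▸ hne)

/-- if stage 2 is connected then the leftmost and rightmost
columns of `G` occupy a common row. -/
theorem horizontal_connection_point (G : Set (ℕ × ℕ)) (hGen : IsGenerator G)
    (hconn : IsConnectedSet (stage G 2)) :
    ∃ y : ℕ, (0, y) ∈ G ∧ (wG G - 1, y) ∈ G := by
  have hbox := hGen.ssubset_box.subset
  have h0 := hGen.zero_mem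
  obtain ⟨b, hb, hb1⟩ := exists_mem_fst_eq_wG_sub_one hGen.finite ⟨_, h0⟩
  have hb0 : b.1 ≠ 0 := by have := hGen.one_lt_w; omega
  have hw : 0 < wG G := Nat.succ_pos _
  obtain ⟨p, q, hpq, hne⟩ := hconn.preconnected.exists_adj_ne
    (fun p : stage G 2 => p.1.1 / wG G)
    (u := ⟨_, add_mul_mem_stage_two h0 h0⟩) (v := ⟨_, add_mul_mem_stage_two h0 hb⟩)
    (by simpa [hw] using hb0.symm)
  exact exists_common_row_of_adjPt (mod_mem_of_mem_stage_two hbox p.2)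
    (mod_mem_of_mem_stage_two hbox q.2) hpq hne
end
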